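/- arXiv:2407.11521 — 2 statements merged into one kernel-verified Lean document; each statement's English description precedes it below -/
import Mathlib

section
/- Let G be a simple graph on vertex set V and let G* be its augmented graph with universal vertex u*. Let M* be a Moore–Penrose pseudoinverse of the Laplacian L_{G*}. Then for all u, v ∈ V, the forest distance in G equals the effective resistance in G*: Ω[u,u] − 2·Ω[u,v] + Ω[v,v] = M*[u,u] − 2·M*[u,v] + M*[v,v], where Ω = (L_G + I)^{−1}. -/
open Matrix BigOperators

/-- `M` is a Moore–Penrose pseudoinverse of `L`. -/
def IsMoorePenrose {n : Type*} [Fintype n] (L M : Matrix n n ℝ) : Prop :=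
  L * M * L = L ∧ M * L * M = M ∧ (L * M)ᵀ = L * M ∧ (M * L)ᵀ = M * L

/-- The augmented graph `G*` of `G`: a new universal vertex `none` is joined
to every vertex of `G`. -/
def augment {V : Type*} (G : SimpleGraph V) : SimpleGraph (Option V) :=
  SimpleGraph.fromRel fun x y =>
    (∃ u v, x = some u ∧ y = some v ∧ G.Adj u v) ∨ x = none ∨ y = none

instance augmentAdjDecidable {V : Type*} [Fintype V] [DecidableEq V]
    (G : SimpleGraph V) [DecidableRel G.Adj] : DecidableRel (augment G).Adj :=
  fun x y => decidable_of_iff' _ (SimpleGraph.fromRel_adj _ x y)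

/-!
Put `A = L_G + I` and `e = 𝟙_u - 𝟙_v`, so that the forest distance is `eᵀ A⁻¹ e`. Since the
columns of `L_G` sum to zero, `z = A⁻¹ e` sums to zero, and then the extension `y` of `z` by
`y(u*) = 0` solves `L_{G*} y = e` (the row of `u*` reads `-∑ z = 0`, the others `A z = e`).
The Penrose identity `L M L = L` turns `eᵀ M e = yᵀ L M L y` into `yᵀ L y = zᵀ e`.
-/

namespace IsMoorePenrose

variable {n : Type*} [Fintype n] {L M N : Matrix n n ℝ}

theorem unique (hM : IsMoorePenrose L M) (hN : IsMoorePenrose L N) : M = N := by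
  obtain ⟨hM1, hM2, hM3, hM4⟩ := hM
  obtain ⟨hN1, hN2, hN3, hN4⟩ := hN
  have hLM : L * M = L * N :=
    calc L * M = (L * N)ᵀ * (L * M)ᵀ := by rw [hN3, hM3, ← Matrix.mul_assoc, hN1]
      _ = (L * M * L * N)ᵀ := by simp only [← transpose_mul, Matrix.mul_assoc]
      _ = L * N := by rw [hM1, hN3]
  have hML : M * L = N * L :=
    calc M * L = (M * L)ᵀ * (N * L)ᵀ := by
          rw [hM4, hN4, Matrix.mul_assoc, ← Matrix.mul_assoc L, hN1]
      _ = (N * (L * M * L))ᵀ := by simp only [← transpose_mul, Matrix.mul_assoc]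
      _ = N * L := by rw [hM1, hN4]
  calc M = M * L * M := hM2.symm
    _ = N * L * N := by rw [hML, Matrix.mul_assoc, hLM, ← Matrix.mul_assoc]
    _ = N := hN2

theorem transpose (hM : IsMoorePenrose L M) : IsMoorePenrose Lᵀ Mᵀ := by
  obtain ⟨h1, h2, h3, h4⟩ := hM
  refine ⟨?_, ?_, ?_, ?_⟩
  · rw [← transpose_mul, ← transpose_mul, ← Matrix.mul_assoc, h1]
  · rw [← transpose_mul, ← transpose_mul, ← Matrix.mul_assoc, h2]
  · rw [← transpose_mul, transpose_transpose, h4]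
  · rw [← transpose_mul, transpose_transpose, h3]

theorem isSymm (hL : L.IsSymm) (hM : IsMoorePenrose L M) : M.IsSymm := by
  have hMt := hM.transpose
  rw [hL.eq] at hMt
  exact hMt.unique hM

theorem vecMul_dotProduct_mulVec_mulVec (hM : IsMoorePenrose L M) (x y : n → ℝ) :
    (x ᵥ* L) ⬝ᵥ (M *ᵥ (L *ᵥ y)) = x ⬝ᵥ (L *ᵥ y) := by
  rw [← dotProduct_mulVec, mulVec_mulVec, mulVec_mulVec, hM.1]

end IsMoorePenrose

theorem Matrix.IsSymm.dotProduct_mulVec_single_sub_single {n R : Type*} [Fintype n]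
    [DecidableEq n] [CommRing R] {B : Matrix n n R} (hB : B.IsSymm) (i j : n) :
    (Pi.single i 1 - Pi.single j 1) ⬝ᵥ (B *ᵥ (Pi.single i 1 - Pi.single j 1)) =
      B i i - 2 * B i j + B j j := by
  have hji : B j i = B i j := hB.apply i j
  simp only [mulVec_sub, mulVec_single_one, dotProduct_sub, sub_dotProduct, single_one_dotProduct,
    col_apply, hji]
  ring

namespace SimpleGraph

variable {V : Type*} (G : SimpleGraph V)

@[simp]
theorem augment_adj_some_some {a b : V} : (augment G).Adj (some a) (some b) ↔ G.Adj a b := by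
  simp only [augment, fromRel_adj, Option.some.injEq, reduceCtorEq, or_false, ne_eq]
  constructor
  · rintro ⟨-, ⟨a, b, rfl, rfl, h⟩ | ⟨a, b, rfl, rfl, h⟩⟩ <;> simp_all [G.adj_comm]
  · intro h
    exact ⟨h.ne, Or.inl ⟨a, b, rfl, rfl, h⟩⟩

@[simp]
theorem augment_adj_some_none (a : V) : (augment G).Adj (some a) none := by
  simp [augment]

@[simp]
theorem augment_adj_none_some (a : V) : (augment G).Adj none (some a) :=
  (augment_adj_some_none G a).symm

variable [Fintype V] [DecidableEq V] [DecidableRel G.Adj]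

theorem degree_augment_some (a : V) : (augment G).degree (some a) = G.degree a + 1 := by
  have h := (augment G).degree_eq_sum_if_adj (R := ℕ) (some a)
  rw [Nat.cast_id, Fintype.sum_option] at h
  rw [h, ← Nat.cast_id (G.degree a), G.degree_eq_sum_if_adj]
  simp [add_comm]

theorem lapMatrix_augment_submatrix_some (R : Type*) [Ring R] :
    ((augment G).lapMatrix R).submatrix some some = G.lapMatrix R + 1 := by
  ext a b
  by_cases hab : a = b
  · subst hab
    simp [lapMatrix, degMatrix, degree_augment_some]
  · simp [lapMatrix, degMatrix, adjMatrix_apply, hab]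

theorem lapMatrix_augment_none_some {R : Type*} [Ring R] (b : V) :
    (augment G).lapMatrix R none (some b) = -1 := by
  simp [lapMatrix, degMatrix, adjMatrix_apply]

theorem lapMatrix_augment_mulVec_elim {R : Type*} [Ring R] (z : V → R) :
    (augment G).lapMatrix R *ᵥ (fun o => o.elim 0 z) =
      fun o => o.elim (-∑ b, z b) ((G.lapMatrix R + 1) *ᵥ z) := by
  ext (_ | a) <;> simp [mulVec, dotProduct, Fintype.sum_option, lapMatrix_augment_none_some,
    ← lapMatrix_augment_submatrix_some G]

theorem sum_lapMatrix_mulVec {R : Type*} [CommRing R] (x : V → R) :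
    ∑ i, (G.lapMatrix R *ᵥ x) i = 0 := by
  rw [← one_dotProduct, dotProduct_mulVec, ← mulVec_transpose, (G.isSymm_lapMatrix R).eq]
  exact (congrArg (· ⬝ᵥ x) G.lapMatrix_mulVec_const_eq_zero).trans (zero_dotProduct x)

theorem sum_lapMatrix_add_one_mulVec {R : Type*} [CommRing R] (x : V → R) :
    ∑ i, ((G.lapMatrix R + 1) *ᵥ x) i = ∑ i, x i := by
  simp [add_mulVec, Finset.sum_add_distrib, sum_lapMatrix_mulVec]

theorem isUnit_det_lapMatrix_add_one : IsUnit (G.lapMatrix ℝ + 1).det :=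
  (isUnit_iff_isUnit_det _).mp
    (PosDef.posSemidef_add (G.posSemidef_lapMatrix ℝ) PosDef.one).isUnit

end SimpleGraph

open SimpleGraph in
theorem forest_distance_eq_augmented_effective_resistance {V : Type*} [Fintype V]
    [DecidableEq V] (G : SimpleGraph V) [DecidableRel G.Adj]
    (M : Matrix (Option V) (Option V) ℝ)
    (hM : IsMoorePenrose ((augment G).lapMatrix ℝ) M) (u v : V) :
    (G.lapMatrix ℝ + 1)⁻¹ u u - 2 * (G.lapMatrix ℝ + 1)⁻¹ u v +
        (G.lapMatrix ℝ + 1)⁻¹ v v =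
      M (some u) (some u) - 2 * M (some u) (some v) + M (some v) (some v) := by
  set A := G.lapMatrix ℝ + 1
  set e : V → ℝ := Pi.single u 1 - Pi.single v 1
  set z := A⁻¹ *ᵥ e
  have hAz : A *ᵥ z = e := by
    rw [mulVec_mulVec, mul_nonsing_inv _ G.isUnit_det_lapMatrix_add_one, one_mulVec]
  have hz : ∑ w, z w = 0 := by
    rw [← G.sum_lapMatrix_add_one_mulVec, hAz]
    simp [e]
  set y : Option V → ℝ := fun o => o.elim 0 z
  have hLy : (augment G).lapMatrix ℝ *ᵥ y = Pi.single (some u) 1 - Pi.single (some v) 1 := by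
    rw [lapMatrix_augment_mulVec_elim, hz, hAz]
    ext (_ | w) <;> simp [e, Pi.single_apply]
  have hL := (augment G).isSymm_lapMatrix ℝ
  have hA : A⁻¹.IsSymm := ((G.isSymm_lapMatrix ℝ).add isSymm_one).inv
  calc _ = e ⬝ᵥ z := (hA.dotProduct_mulVec_single_sub_single u v).symm
    _ = y ⬝ᵥ ((augment G).lapMatrix ℝ *ᵥ y) := by
      rw [hLy]
      simp [y, e, dotProduct_sub, sub_dotProduct]
    _ = (y ᵥ* (augment G).lapMatrix ℝ) ⬝ᵥ (M *ᵥ ((augment G).lapMatrix ℝ *ᵥ y)) :=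
      (hM.vecMul_dotProduct_mulVec_mulVec y y).symm
    _ = _ := by
      rw [← mulVec_transpose, hL.eq, hLy, (hM.isSymm hL).dotProduct_mulVec_single_sub_single]
end

section
/- Let G be a simple graph, {a,b} an edge of G, and G' = G − {a,b}. Then in the augmented graph G* (which is connected and in which the edge {a,b} lies on the triangle a, b, u*), the effective resistance satisfies r* = M*[a,a] − 2·M*[a,b] + M*[b,b] < 1 for any Moore–Penrose pseudoinverse M* of L_{G*}; in particular the denominator 1 − r* appearing in the Sherman–Morrison update for the augmented Laplacian pseudoinverse is nonzero for every edge of G. -/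
/-!
Let `x = e_a - e_b` and `y = M* x`. The graph `G*` is connected, so `x` is orthogonal to the
kernel of `L_{G*}` and hence lies in its range; therefore `L_{G*} y = x`, and the resistance
`r* = x ⬝ y = y_a - y_b` equals the Laplacian form `yᵀ L_{G*} y`. That form is at least the sum of
the squared differences of `y` along the triangle `a, b, u*`. With `p = y_a - y_{u*}` and
`q = y_{u*} - y_b` this reads `(p + q)² + p² + q² ≤ p + q`, and since `p² + q² ≥ (p + q)² / 2`
it forces `r* = p + q ≤ 2/3`.
-/

open Matrix BigOperators

namespace IsMoorePenrose

variable {n : Type*} [Fintype n] {L M N : Matrix n n ℝ}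

theorem mul_mul_eq_self (hL : L.IsSymm) (hM : IsMoorePenrose L M) : L * (L * M) = L := by
  conv_lhs => rw [← hM.2.2.1, transpose_mul, (hM.isSymm hL).eq, hL.eq, ← Matrix.mul_assoc]
  exact hM.1

/-- `Q = 1 - L * M` is symmetric and `L * Q = 0`, so every row of `Q` lies in the kernel of `L`
and is orthogonal to `x`; hence `Q x = 0`. -/
theorem mulVec_mulVec_eq_self [DecidableEq n] (hL : L.IsSymm) (hM : IsMoorePenrose L M)
    {x : n → ℝ} (hx : ∀ w, L *ᵥ w = 0 → x ⬝ᵥ w = 0) : L *ᵥ (M *ᵥ x) = x := by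
  set Q := 1 - L * M
  have hQ : Qᵀ = Q := by rw [transpose_sub, transpose_one, hM.2.2.1]
  have hLQ : L * Q = 0 := by rw [Matrix.mul_sub, Matrix.mul_one, hM.mul_mul_eq_self hL, sub_self]
  have hQx : Q *ᵥ x = 0 := by
    ext i
    rw [← hQ, mulVec_transpose]
    refine hx _ (funext fun k => ?_)
    exact congrFun (congrFun hLQ k) i
  rw [mulVec_mulVec, eq_comm, ← sub_eq_zero, ← hQx, sub_mulVec, one_mulVec]

end IsMoorePenrose

def effectiveResistance {V : Type*} (M : Matrix V V ℝ) (u v : V) : ℝ :=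
  M u u - 2 * M u v + M v v

namespace SimpleGraph

variable {V : Type*} [Fintype V] [DecidableEq V] {G : SimpleGraph V} [DecidableRel G.Adj]

theorem single_sub_single_dotProduct_eq_zero_of_lapMatrix_mulVec_eq_zero {u v : V}
    (huv : G.Reachable u v) {w : V → ℝ} (hw : G.lapMatrix ℝ *ᵥ w = 0) :
    (Pi.single u 1 - Pi.single v 1) ⬝ᵥ w = 0 := by
  rw [sub_dotProduct, single_dotProduct, single_dotProduct,
    G.lapMatrix_mulVec_eq_zero_iff_forall_reachable.mp hw u v huv, sub_self]

theorem sq_add_sq_add_sq_le_dotProduct_lapMatrix_mulVec {R : Type*} [Field R] [LinearOrder R]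
    [IsStrictOrderedRing R] {u v w : V} (huv : G.Adj u v) (hvw : G.Adj v w) (huw : G.Adj u w)
    (x : V → R) :
    (x u - x v) ^ 2 + (x v - x w) ^ 2 + (x u - x w) ^ 2 ≤ x ⬝ᵥ (G.lapMatrix R *ᵥ x) := by
  set f : V → V → R := fun i j => if G.Adj i j then (x i - x j) ^ 2 else 0
  have hf : ∀ i j, 0 ≤ f i j := fun i j => by positivity
  have htri : ∑ i ∈ {u, v, w}, ∑ j ∈ {u, v, w}, f i j =
      2 * ((x u - x v) ^ 2 + (x v - x w) ^ 2 + (x u - x w) ^ 2) := by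
    simp only [f, Finset.mem_insert, Finset.mem_singleton, Finset.sum_insert, Finset.sum_singleton,
      huv.ne, hvw.ne, huw.ne, or_self, not_false_eq_true, SimpleGraph.irrefl, huv, hvw, huw,
      huv.symm, hvw.symm, huw.symm, ↓reduceIte, zero_add, add_zero]
    ring
  rw [← toLinearMap₂'_apply', lapMatrix_toLinearMap₂', le_div_iff₀ two_pos, mul_comm, ← htri]
  calc ∑ i ∈ {u, v, w}, ∑ j ∈ {u, v, w}, f i j ≤ ∑ i ∈ {u, v, w}, ∑ j, f i j :=
        Finset.sum_le_sum fun i _ => Finset.sum_le_univ_sum_of_nonneg (hf i)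
    _ ≤ ∑ i, ∑ j, f i j :=
        Finset.sum_le_univ_sum_of_nonneg fun i => Finset.sum_nonneg fun j _ => hf i j

theorem effectiveResistance_lt_one_of_adj_of_adj_of_adj {M : Matrix V V ℝ}
    (hM : IsMoorePenrose (G.lapMatrix ℝ) M) {u v w : V} (huv : G.Adj u v) (hvw : G.Adj v w)
    (huw : G.Adj u w) : effectiveResistance M u v < 1 := by
  have hL : (G.lapMatrix ℝ).IsSymm := G.isSymm_lapMatrix (R := ℝ)
  set x : V → ℝ := Pi.single u 1 - Pi.single v 1
  set y := M *ᵥ x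
  have hLy : G.lapMatrix ℝ *ᵥ y = x := hM.mulVec_mulVec_eq_self hL
    fun _ => single_sub_single_dotProduct_eq_zero_of_lapMatrix_mulVec_eq_zero huv.reachable
  have hr : effectiveResistance M u v = y u - y v := by
    have hvu : M v u = M u v := (hM.isSymm hL).apply u v
    simp only [effectiveResistance, y, x, mulVec_sub, mulVec_single_one, Pi.sub_apply, col_apply,
      hvu]
    ring
  have hquad : y ⬝ᵥ (G.lapMatrix ℝ *ᵥ y) = y u - y v := by
    rw [hLy, dotProduct_comm, sub_dotProduct, single_dotProduct, single_dotProduct, one_mul,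
      one_mul]
  have htri := sq_add_sq_add_sq_le_dotProduct_lapMatrix_mulVec huv hvw huw y
  rw [hquad] at htri
  rw [hr]
  nlinarith [sq_nonneg (y u - 2 * y w + y v)]

end SimpleGraph

namespace augment

variable {V : Type*} (G : SimpleGraph V)

theorem adj_none_some (v : V) : (augment G).Adj none (some v) := by
  simp [augment]

theorem adj_some_some {u v : V} (huv : G.Adj u v) : (augment G).Adj (some u) (some v) := by
  simp [augment, huv, huv.ne]

theorem connected : (augment G).Connected := by
  have hreach : ∀ x, (augment G).Reachable none x
    | none => .rfl
    | some v => (adj_none_some G v).reachable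
  exact (SimpleGraph.connected_iff_exists_forall_reachable _).mpr ⟨none, hreach⟩

end augment

theorem augmented_effective_resistance_lt_one {V : Type*} [Fintype V]
    [DecidableEq V] (G : SimpleGraph V) [DecidableRel G.Adj]
    (a b : V) (hab : G.Adj a b)
    (M : Matrix (Option V) (Option V) ℝ)
    (hM : IsMoorePenrose ((augment G).lapMatrix ℝ) M) :
    (augment G).Connected ∧
      M (some a) (some a) - 2 * M (some a) (some b) + M (some b) (some b) < 1 ∧
      1 - (M (some a) (some a) - 2 * M (some a) (some b) + M (some b) (some b)) ≠ 0 := by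
  have hr : effectiveResistance M (some a) (some b) < 1 :=
    SimpleGraph.effectiveResistance_lt_one_of_adj_of_adj_of_adj hM (augment.adj_some_some G hab)
      (augment.adj_none_some G b).symm (augment.adj_none_some G a).symm
  exact ⟨augment.connected G, hr, sub_ne_zero.mpr hr.ne'⟩
end
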